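/- arXiv:2406.19273 — 7 statements merged into one kernel-verified Lean document; each statement's English description precedes it below -/
import Mathlib

section
/- Let G be a connected simple graph on a finite vertex set V with more than one vertex, let u : V → C be a Nash equilibrium strategy profile on G, and let c be any strategy. Then the cluster {v ∈ V : u(v) = c} does not consist of exactly one vertex. -/
open SimpleGraph

/-- Payoff of vertex `v` for strategy `c` under profile `u`: the number of
neighbors of `v` playing strategy `c`. -/
noncomputable def payoff {V C : Type*} (G : SimpleGraph V) (u : V → C) (v : V) (c : C) : ℕ :=
  {x | G.Adj v x ∧ u x = c}.ncard

/-- `u` is a Nash equilibrium of the structured coordination game with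
neutral options on `G`. -/
def IsNash {V C : Type*} (G : SimpleGraph V) (u : V → C) : Prop :=
  ∀ (v : V) (c : C), payoff G u v c ≤ payoff G u v (u v)

theorem no_singleton_cluster {V C : Type*} [Fintype V] (G : SimpleGraph V)
    (hconn : G.Connected) (hV : 1 < Fintype.card V)
    (u : V → C) (hu : IsNash G u) (c : C) :
    {v : V | u v = c}.ncard ≠ 1 := by
  intro h1
  obtain ⟨v0, hv0⟩ := Set.ncard_eq_one.mp h1
  have hv0c : u v0 = c := by
    have : v0 ∈ {v : V | u v = c} := hv0 ▸ rfl
    exact this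
  have honly : ∀ w, u w = c → w = v0 := fun w hw => by
    have : w ∈ ({v0} : Set V) := hv0 ▸ hw
    exact this
  -- find a neighbor of v0
  obtain ⟨w, hw⟩ := Fintype.exists_ne_of_one_lt_card hV v0
  obtain ⟨p⟩ := hconn.preconnected v0 w
  obtain ⟨x, hadj⟩ : ∃ x, G.Adj v0 x := by
    cases p with
    | nil => exact absurd rfl hw
    | cons h q => exact ⟨_, h⟩
  -- payoff of v0 for c is 0
  have h0 : payoff G u v0 c = 0 := by
    unfold payoff
    rw [Set.ncard_eq_zero]
    ext y
    simp only [Set.mem_setOf_eq, Set.mem_empty_iff_false, iff_false, not_and]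
    intro hy hyc
    exact G.irrefl (honly y hyc ▸ hy)
  -- payoff of v0 for u x is at least 1
  have h1' : 1 ≤ payoff G u v0 (u x) := by
    unfold payoff
    have hmem : x ∈ {y | G.Adj v0 y ∧ u y = u x} := ⟨hadj, rfl⟩
    have hfin : {y | G.Adj v0 y ∧ u y = u x}.Finite := Set.toFinite _
    exact (Set.ncard_pos hfin).mpr ⟨x, hmem⟩
  have := hu v0 (u x)
  rw [hv0c, h0] at this
  omega
end

section
/- Let G be a simple graph on a finite vertex set V and let u : V → C be a Nash equilibrium strategy profile. Define the refined profile u' sending each vertex v to the pair (u(v), K(v)), where K(v) is the connected component of v in the subgraph of G induced on the cluster {x ∈ V : u(x) = u(v)}. Then u' is a Nash equilibrium (with strategy set the pairs consisting of a strategy and a component). In particular, refining any equilibrium partition by splitting each part into the connected components of its induced subgraph yields an equilibrium partition. -/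
open SimpleGraph

/-- The subgraph of `G` whose edges join vertices playing the same strategy
under `u`.  Its connected components are exactly the connected components of
the subgraphs of `G` induced on the clusters of `u`. -/
def sameStrategySubgraph {V C : Type*} (G : SimpleGraph V) (u : V → C) : SimpleGraph V where
  Adj x y := G.Adj x y ∧ u x = u y
  symm := ⟨fun x y h => ⟨h.1.symm, h.2.symm⟩⟩
  loopless := ⟨fun x h => G.loopless.irrefl x h.1⟩

/-!
Splitting strategies can only lower the payoff of any strategy, while a vertex's payoff for its
own refined strategy is unchanged: every neighbour sharing its strategy is adjacent to it in the
same-strategy subgraph, hence lies in its component.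
-/

section Refinement

variable {V C C' : Type*} (G : SimpleGraph V)

theorem payoff_le_payoff_of_factor [Finite V] {u : V → C} {u' : V → C'} {f : C' → C}
    (hf : ∀ x, f (u' x) = u x) (v : V) (c' : C') :
    payoff G u' v c' ≤ payoff G u v (f c') :=
  Set.ncard_le_ncard fun x ⟨hadj, hx⟩ => ⟨hadj, hx ▸ (hf x).symm⟩

theorem payoff_self_eq_of_factor {u : V → C} {u' : V → C'} {f : C' → C}
    (hf : ∀ x, f (u' x) = u x) (hsplit : ∀ x y, G.Adj x y → u x = u y → u' x = u' y) (v : V) :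
    payoff G u' v (u' v) = payoff G u v (u v) := by
  unfold payoff
  congr 1
  ext x
  refine ⟨fun ⟨hadj, hx⟩ => ⟨hadj, ?_⟩, fun ⟨hadj, hx⟩ => ⟨hadj, (hsplit v x hadj hx.symm).symm⟩⟩
  rw [← hf x, ← hf v, hx]

theorem IsNash.of_factor [Finite V] {u : V → C} {u' : V → C'} (hu : IsNash G u) {f : C' → C}
    (hf : ∀ x, f (u' x) = u x) (hsplit : ∀ x y, G.Adj x y → u x = u y → u' x = u' y) :
    IsNash G u' := fun v c' =>
  calc payoff G u' v c' ≤ payoff G u v (f c') := payoff_le_payoff_of_factor G hf v c'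
    _ ≤ payoff G u v (u v) := hu v (f c')
    _ = payoff G u' v (u' v) := (payoff_self_eq_of_factor G hf hsplit v).symm

end Refinement

theorem refinement_isNash {V C : Type*} [Fintype V] (G : SimpleGraph V)
    (u : V → C) (hu : IsNash G u) :
    IsNash G (fun v => (u v, (sameStrategySubgraph G u).connectedComponentMk v)) :=
  hu.of_factor G (f := Prod.fst) (fun _ => rfl) fun _ _ hadj hxy =>
    Prod.ext hxy (ConnectedComponent.sound (Adj.reachable ⟨hadj, hxy⟩))
end

section
/- Let n, m ≥ 1 and let d be a positive common divisor of n and m. Then the complete bipartite graph K_{n,m} admits a Nash equilibrium strategy profile using exactly d distinct strategies: partition the side of size n into d groups of size n/d and the side of size m into d groups of size m/d, and assign the i-th strategy to the i-th group on each side; the resulting profile is a Nash equilibrium whose image has exactly d elements. -/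
open SimpleGraph

lemma filter_div_card (q d c : ℕ) (hq : 0 < q) :
    ((Finset.range (q * d)).filter (fun y => y / q = c)).card
      = if c < d then q else 0 := by
  split_ifs with h
  · have heq : (Finset.range (q*d)).filter (fun y => y / q = c)
        = Finset.Ico (q*c) (q*c+q) := by
      ext y
      simp only [Finset.mem_filter, Finset.mem_range, Finset.mem_Ico]
      constructor
      · rintro ⟨hy, rfl⟩
        have h1 := Nat.div_add_mod y q
        have h2 := Nat.mod_lt y hq
        constructor
        · calc q * (y/q) ≤ q * (y/q) + y % q := Nat.le_add_right _ _
            _ = y := h1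
        · calc y = q * (y/q) + y % q := h1.symm
            _ < q * (y/q) + q := Nat.add_lt_add_left h2 _
      · rintro ⟨h1, h2⟩
        have hlt : y < q * d := by
          calc y < q*c + q := h2
            _ = q * (c+1) := by ring
            _ ≤ q * d := Nat.mul_le_mul_left _ h
        refine ⟨hlt, Nat.div_eq_of_lt_le (by linarith) ?_⟩
        calc y < q*c + q := h2
          _ = (c+1) * q := by ring
    rw [heq, Nat.card_Ico]; omega
  · rw [Finset.filter_eq_empty_iff.mpr, Finset.card_empty]
    intro y hy
    rw [Finset.mem_range] at hy
    have : y / q < d := (Nat.div_lt_iff_lt_mul hq).mpr (by linarith)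
    omega

lemma fin_count (m q d c : ℕ) (hq : 0 < q) (hm : m = q * d) :
    {y : Fin m | (y : ℕ) / q = c}.ncard = if c < d then q else 0 := by
  classical
  rw [Set.ncard_eq_toFinset_card', Set.toFinset_setOf]
  rw [show (Finset.univ.filter fun y : Fin m => (y : ℕ)/q = c).card
      = ((Finset.range m).filter (fun y => y/q = c)).card from ?_, hm,
    filter_div_card q d c hq]
  refine Finset.card_bij (fun (y : Fin m) (_ : y ∈ Finset.univ.filter fun y : Fin m => (y : ℕ)/q = c) => (y : ℕ)) ?_ ?_ ?_
  · intro a ha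
    simp only [Finset.mem_filter, Finset.mem_univ, true_and] at ha
    simp [a.isLt, ha]
  · intro a _ b _ hab
    exact Fin.val_injective hab
  · intro b hb
    simp only [Finset.mem_filter, Finset.mem_range] at hb
    exact ⟨⟨b, hb.1⟩, by simp [hb.2], rfl⟩

lemma payoff_left (n m : ℕ) (f : Fin n → ℕ) (g : Fin m → ℕ) (a : Fin n) (c : ℕ) :
    payoff (completeBipartiteGraph (Fin n) (Fin m)) (Sum.elim f g) (Sum.inl a) c
      = {y : Fin m | g y = c}.ncard := by
  unfold payoff
  rw [show {x | (completeBipartiteGraph (Fin n) (Fin m)).Adj (Sum.inl a) x ∧ Sum.elim f g x = c}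
      = Sum.inr '' {y : Fin m | g y = c} from ?_]
  · exact Set.ncard_image_of_injective _ Sum.inr_injective
  · ext x
    cases x with
    | inl b => simp [completeBipartiteGraph]
    | inr y => simp [completeBipartiteGraph]

lemma payoff_right (n m : ℕ) (f : Fin n → ℕ) (g : Fin m → ℕ) (b : Fin m) (c : ℕ) :
    payoff (completeBipartiteGraph (Fin n) (Fin m)) (Sum.elim f g) (Sum.inr b) c
      = {x : Fin n | f x = c}.ncard := by
  unfold payoff
  rw [show {x | (completeBipartiteGraph (Fin n) (Fin m)).Adj (Sum.inr b) x ∧ Sum.elim f g x = c}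
      = Sum.inl '' {x : Fin n | f x = c} from ?_]
  · exact Set.ncard_image_of_injective _ Sum.inl_injective
  · ext x
    cases x with
    | inl a => simp [completeBipartiteGraph]
    | inr y => simp [completeBipartiteGraph]

lemma range_div (n p d : ℕ) (hp : 0 < p) (hn : n = p * d) :
    Set.range (fun x : Fin n => (x : ℕ) / p) = {c : ℕ | c < d} := by
  ext c
  simp only [Set.mem_range, Set.mem_setOf_eq]
  constructor
  · rintro ⟨x, rfl⟩
    have : (x : ℕ) < p * d := hn ▸ x.isLt
    exact (Nat.div_lt_iff_lt_mul hp).mpr (by linarith)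
  · intro hc
    have hlt : c * p < n := by
      calc c * p < (c+1) * p := by nlinarith
        _ ≤ d * p := Nat.mul_le_mul_right _ hc
        _ = n := by rw [hn]; ring
    exact ⟨⟨c * p, hlt⟩, by simp [Nat.mul_div_cancel _ hp]⟩

theorem completeBipartite_equilibrium_of_dvd (n m d : ℕ) (hn : 1 ≤ n) (hm : 1 ≤ m)
    (hd : 1 ≤ d) (hdn : d ∣ n) (hdm : d ∣ m) :
    IsNash (completeBipartiteGraph (Fin n) (Fin m))
      (Sum.elim (fun x : Fin n => (x : ℕ) / (n / d)) (fun y : Fin m => (y : ℕ) / (m / d))) ∧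
    (Set.range (Sum.elim (fun x : Fin n => (x : ℕ) / (n / d))
      (fun y : Fin m => (y : ℕ) / (m / d)))).ncard = d := by
  set p := n / d with hpdef
  set q := m / d with hqdef
  have hp : 0 < p := Nat.div_pos (Nat.le_of_dvd (by omega) hdn) hd
  have hq : 0 < q := Nat.div_pos (Nat.le_of_dvd (by omega) hdm) hd
  have hnp : n = p * d := by rw [hpdef, Nat.div_mul_cancel hdn]
  have hmq : m = q * d := by rw [hqdef, Nat.div_mul_cancel hdm]
  constructor
  · intro v c
    cases v with
    | inl a =>
      rw [payoff_left, payoff_left, fin_count m q d c hq hmq]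
      have ha : Sum.elim (fun x : Fin n => (x : ℕ) / p) (fun y : Fin m => (y : ℕ) / q)
          (Sum.inl a) = (a : ℕ) / p := rfl
      rw [ha, fin_count m q d _ hq hmq]
      have : (a : ℕ) / p < d := (Nat.div_lt_iff_lt_mul hp).mpr (by
        calc (a : ℕ) < n := a.isLt
          _ = d * p := by rw [hnp]; ring)
      rw [if_pos this]
      split_ifs <;> omega
    | inr b =>
      rw [payoff_right, payoff_right, fin_count n p d c hp hnp]
      have hb : Sum.elim (fun x : Fin n => (x : ℕ) / p) (fun y : Fin m => (y : ℕ) / q)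
          (Sum.inr b) = (b : ℕ) / q := rfl
      rw [hb, fin_count n p d _ hp hnp]
      have : (b : ℕ) / q < d := (Nat.div_lt_iff_lt_mul hq).mpr (by
        calc (b : ℕ) < m := b.isLt
          _ = d * q := by rw [hmq]; ring)
      rw [if_pos this]
      split_ifs <;> omega
  · rw [Set.Sum.elim_range, range_div n p d hp hnp, range_div m q d hq hmq, Set.union_self]
    rw [show {c : ℕ | c < d} = ↑(Finset.range d) by ext c; simp]
    rw [Set.ncard_coe_finset, Finset.card_range]
end

section
/- Let n, m ≥ 1. If the complete bipartite graph K_{n,m} admits a Nash equilibrium strategy profile whose image consists of exactly d distinct strategies, then d divides n and d divides m. -/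
open SimpleGraph

theorem completeBipartite_dvd_of_equilibrium {C : Type*} (n m d : ℕ)
    (hn : 1 ≤ n) (hm : 1 ≤ m) (u : Fin n ⊕ Fin m → C)
    (hu : IsNash (completeBipartiteGraph (Fin n) (Fin m)) u)
    (hd : (Set.range u).ncard = d) :
    d ∣ n ∧ d ∣ m := by
  classical
  set G := completeBipartiteGraph (Fin n) (Fin m) with hG
  let L : C → ℕ := fun c => (Finset.univ.filter fun a : Fin n => u (Sum.inl a) = c).card
  let R : C → ℕ := fun c => (Finset.univ.filter fun b : Fin m => u (Sum.inr b) = c).card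
  have payL : ∀ (a : Fin n) (c : C), payoff G u (Sum.inl a) c = R c := by
    intro a c
    have hset : {x | G.Adj (Sum.inl a) x ∧ u x = c}
        = Sum.inr '' {b : Fin m | u (Sum.inr b) = c} := by
      ext x
      cases x with
      | inl a' => simp [hG]
      | inr b => simp [hG]
    rw [payoff, hset, Set.ncard_image_of_injective _ Sum.inr_injective,
      Set.ncard_eq_toFinset_card', Set.toFinset_setOf]
  have payR : ∀ (b : Fin m) (c : C), payoff G u (Sum.inr b) c = L c := by
    intro b c
    have hset : {x | G.Adj (Sum.inr b) x ∧ u x = c}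
        = Sum.inl '' {a : Fin n | u (Sum.inl a) = c} := by
      ext x
      cases x with
      | inl a' => simp [hG]
      | inr b' => simp [hG]
    rw [payoff, hset, Set.ncard_image_of_injective _ Sum.inl_injective,
      Set.ncard_eq_toFinset_card', Set.toFinset_setOf]
  have hRmax : ∀ (a : Fin n) (c : C), R c ≤ R (u (Sum.inl a)) := by
    intro a c
    have := hu (Sum.inl a) c
    rwa [payL, payL] at this
  have hLmax : ∀ (b : Fin m) (c : C), L c ≤ L (u (Sum.inr b)) := by
    intro b c
    have := hu (Sum.inr b) c
    rwa [payR, payR] at this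
  obtain ⟨a0, -⟩ : ∃ a : Fin n, True := ⟨⟨0, hn⟩, trivial⟩
  obtain ⟨b0, -⟩ : ∃ b : Fin m, True := ⟨⟨0, hm⟩, trivial⟩
  have Lpos : ∀ a : Fin n, 1 ≤ L (u (Sum.inl a)) := by
    intro a
    have : a ∈ Finset.univ.filter fun a' : Fin n => u (Sum.inl a') = u (Sum.inl a) := by
      simp
    exact Finset.card_pos.mpr ⟨a, this⟩
  have Rpos : ∀ b : Fin m, 1 ≤ R (u (Sum.inr b)) := by
    intro b
    have : b ∈ Finset.univ.filter fun b' : Fin m => u (Sum.inr b') = u (Sum.inr b) := by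
      simp
    exact Finset.card_pos.mpr ⟨b, this⟩
  -- every used strategy is used on the right
  have existsRight : ∀ c ∈ Set.range u, ∃ b : Fin m, u (Sum.inr b) = c := by
    rintro c ⟨x, rfl⟩
    cases x with
    | inr b => exact ⟨b, rfl⟩
    | inl a =>
      have h1 : 1 ≤ R (u (Sum.inl a)) :=
        le_trans (Rpos b0) (hRmax a (u (Sum.inr b0)))
      obtain ⟨b, hb⟩ := Finset.card_pos.mp h1
      exact ⟨b, (Finset.mem_filter.mp hb).2⟩
  have existsLeft : ∀ c ∈ Set.range u, ∃ a : Fin n, u (Sum.inl a) = c := by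
    rintro c ⟨x, rfl⟩
    cases x with
    | inl a => exact ⟨a, rfl⟩
    | inr b =>
      have h1 : 1 ≤ L (u (Sum.inr b)) :=
        le_trans (Lpos a0) (hLmax b (u (Sum.inl a0)))
      obtain ⟨a, ha⟩ := Finset.card_pos.mp h1
      exact ⟨a, (Finset.mem_filter.mp ha).2⟩
  have hMaxL : ∀ c ∈ Set.range u, ∀ c', L c' ≤ L c := by
    intro c hc c'
    obtain ⟨b, rfl⟩ := existsRight c hc
    exact hLmax b c'
  have hMaxR : ∀ c ∈ Set.range u, ∀ c', R c' ≤ R c := by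
    intro c hc c'
    obtain ⟨a, rfl⟩ := existsLeft c hc
    exact hRmax a c'
  set c0 : C := u (Sum.inl a0) with hc0
  have hc0mem : c0 ∈ Set.range u := ⟨Sum.inl a0, rfl⟩
  have Lconst : ∀ c ∈ Set.range u, L c = L c0 :=
    fun c hc => le_antisymm (hMaxL c0 hc0mem c) (hMaxL c hc c0)
  have Rconst : ∀ c ∈ Set.range u, R c = R c0 :=
    fun c hc => le_antisymm (hMaxR c0 hc0mem c) (hMaxR c hc c0)
  have hfin : (Set.range u).Finite := Set.finite_range u
  set S : Finset C := hfin.toFinset with hS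
  have hSd : S.card = d := by
    rw [← hd, Set.ncard_eq_toFinset_card _ hfin]
  have hnL : n = ∑ c ∈ S, L c := by
    have := Finset.card_eq_sum_card_fiberwise
      (f := fun a : Fin n => u (Sum.inl a)) (s := Finset.univ) (t := S)
      (fun a _ => by simp [hS, Set.Finite.mem_toFinset])
    simpa using this
  have hmR : m = ∑ c ∈ S, R c := by
    have := Finset.card_eq_sum_card_fiberwise
      (f := fun b : Fin m => u (Sum.inr b)) (s := Finset.univ) (t := S)
      (fun b _ => by simp [hS, Set.Finite.mem_toFinset])
    simpa using this
  constructor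
  · refine ⟨L c0, ?_⟩
    rw [hnL, Finset.sum_congr rfl (fun c hc => Lconst c (by
      simpa [hS, Set.Finite.mem_toFinset] using hc)), Finset.sum_const, hSd, smul_eq_mul]
  · refine ⟨R c0, ?_⟩
    rw [hmR, Finset.sum_congr rfl (fun c hc => Rconst c (by
      simpa [hS, Set.Finite.mem_toFinset] using hc)), Finset.sum_const, hSd, smul_eq_mul]
end

section
/- For all n, m ≥ 1, the complete bipartite graph K_{n,m} is indecomposable (every Nash equilibrium strategy profile on K_{n,m} is constant) if and only if n and m are coprime. -/
open SimpleGraph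

/-!
On `K_{n,m}` the payoff of a vertex for `c` is the number of vertices on the other side playing
`c`, so a profile is a Nash equilibrium iff every vertex plays a most frequent strategy of the
other side. In an equilibrium both sides then use the same set `S` of strategies, and each
strategy of `S` is used equally often on each side, so `|S|` divides both `n` and `m`.
Conversely, if `d = gcd(n, m) > 1`, colouring each side with `d` colours used equally often
gives a non-constant equilibrium.
-/

section

variable {α β C : Type*}

def IsMode (f : α → C) (c : C) : Prop :=
  ∀ c', (f ⁻¹' {c'}).ncard ≤ (f ⁻¹' {c}).ncard

section IsMode

variable {f : α → C} {c c' : C}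

theorem IsMode.ncard_preimage_eq (h : IsMode f c) (h' : IsMode f c') :
    (f ⁻¹' {c}).ncard = (f ⁻¹' {c'}).ncard :=
  le_antisymm (h' c) (h c')

theorem IsMode.mem_range [Finite α] [Nonempty α] (h : IsMode f c) : c ∈ Set.range f := by
  obtain ⟨a⟩ := ‹Nonempty α›
  have hpos : 0 < (f ⁻¹' {f a}).ncard := (Set.ncard_pos (Set.toFinite _)).2 ⟨a, rfl⟩
  exact (Set.ncard_pos (Set.toFinite _)).1 (hpos.trans_le (h (f a)))

theorem isMode_of_ncard_preimage_eq {k : ℕ} (h : ∀ c, (f ⁻¹' {c}).ncard = k) (c : C) :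
    IsMode f c :=
  fun c' => ((h c').trans (h c).symm).le

end IsMode

theorem ncard_range_mul_eq_card [Finite α] (f : α → C) {k : ℕ}
    (h : ∀ a, (f ⁻¹' {f a}).ncard = k) : (Set.range f).ncard * k = Nat.card α := by
  classical
  have := Fintype.ofFinite α
  have hrange : Set.range f = ↑(Finset.univ.image f) := by simp
  have hfiber (c : C) : f ⁻¹' {c} = ↑(Finset.univ.filter (f · = c)) := by ext; simp
  rw [hrange, Set.ncard_coe_finset, Nat.card_eq_fintype_card, ← Finset.card_univ,
    Finset.card_eq_sum_card_image f, Finset.sum_const_nat]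
  intro c hc
  obtain ⟨a, -, rfl⟩ := Finset.mem_image.1 hc
  rw [← Set.ncard_coe_finset, ← hfiber, h]

theorem ncard_range_dvd_card_of_isMode [Finite α] {f : α → C} (hf : ∀ a, IsMode f (f a)) :
    (Set.range f).ncard ∣ Nat.card α := by
  cases isEmpty_or_nonempty α with
  | inl _ => simp
  | inr h =>
    obtain ⟨a₀⟩ := h
    exact Dvd.intro _ (ncard_range_mul_eq_card f fun a => (hf a).ncard_preimage_eq (hf a₀))

theorem exists_ncard_preimage_eq_div [Finite α] {d : ℕ} (hd : d ∣ Nat.card α) :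
    ∃ f : α → Fin d, ∀ c, (f ⁻¹' {c}).ncard = Nat.card α / d := by
  obtain ⟨k, hk⟩ := hd
  let e : α ≃ Fin k × Fin d :=
    (Finite.equivFin α).trans ((finCongr (hk.trans (mul_comm d k))).trans finProdFinEquiv.symm)
  refine ⟨Prod.snd ∘ e, fun c => ?_⟩
  rw [Set.preimage_comp, Set.ncard_preimage_of_injective_subset_range e.injective (by simp),
    ← Set.univ_prod, Set.ncard_prod, Set.ncard_univ, Nat.card_fin, Set.ncard_singleton, hk,
    Nat.mul_div_cancel_left _ c.pos, mul_one]

theorem payoff_completeBipartiteGraph_inl (u : α ⊕ β → C) (a : α) (c : C) :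
    payoff (completeBipartiteGraph α β) u (.inl a) c = ((u ∘ Sum.inr) ⁻¹' {c}).ncard := by
  have : {x | (completeBipartiteGraph α β).Adj (.inl a) x ∧ u x = c} =
      Sum.inr '' ((u ∘ Sum.inr) ⁻¹' {c}) := by
    ext (x | x) <;> simp
  rw [payoff, this, Set.ncard_image_of_injective _ Sum.inr_injective]

theorem payoff_completeBipartiteGraph_inr (u : α ⊕ β → C) (b : β) (c : C) :
    payoff (completeBipartiteGraph α β) u (.inr b) c = ((u ∘ Sum.inl) ⁻¹' {c}).ncard := by
  have : {x | (completeBipartiteGraph α β).Adj (.inr b) x ∧ u x = c} =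
      Sum.inl '' ((u ∘ Sum.inl) ⁻¹' {c}) := by
    ext (x | x) <;> simp
  rw [payoff, this, Set.ncard_image_of_injective _ Sum.inl_injective]

theorem isNash_completeBipartiteGraph_iff (u : α ⊕ β → C) :
    IsNash (completeBipartiteGraph α β) u ↔
      (∀ a, IsMode (u ∘ Sum.inr) (u (.inl a))) ∧ ∀ b, IsMode (u ∘ Sum.inl) (u (.inr b)) := by
  simp only [IsNash, IsMode, Sum.forall, payoff_completeBipartiteGraph_inl,
    payoff_completeBipartiteGraph_inr]

theorem IsNash.eq_of_coprime_completeBipartiteGraph [Finite α] [Finite β] [Nonempty α]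
    [Nonempty β] {u : α ⊕ β → C} (hu : IsNash (completeBipartiteGraph α β) u)
    (hcop : (Nat.card α).Coprime (Nat.card β)) (v w : α ⊕ β) : u v = u w := by
  obtain ⟨hα, hβ⟩ := (isNash_completeBipartiteGraph_iff u).1 hu
  set f := u ∘ Sum.inl
  set g := u ∘ Sum.inr
  have hrange : Set.range f = Set.range g :=
    (Set.range_subset_iff.2 fun a => (hα a).mem_range).antisymm
      (Set.range_subset_iff.2 fun b => (hβ b).mem_range)
  have hf (a : α) : IsMode f (f a) := by
    obtain ⟨b, hb⟩ : f a ∈ Set.range g := hrange ▸ Set.mem_range_self a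
    exact hb ▸ hβ b
  have hg (b : β) : IsMode g (g b) := by
    obtain ⟨a, ha⟩ : g b ∈ Set.range f := hrange ▸ Set.mem_range_self b
    exact ha ▸ hα a
  have hone : (Set.range f).ncard = 1 := Nat.dvd_one.1 <| hcop ▸
    Nat.dvd_gcd (ncard_range_dvd_card_of_isMode hf) (hrange ▸ ncard_range_dvd_card_of_isMode hg)
  obtain ⟨c, hc⟩ := Set.ncard_eq_one.1 hone
  have hconst : ∀ x, u x = c := by
    rintro (a | b)
    · exact Set.eq_of_mem_singleton (hc ▸ Set.mem_range_self (f := f) a)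
    · exact Set.eq_of_mem_singleton ((hrange ▸ hc) ▸ Set.mem_range_self (f := g) b)
  rw [hconst v, hconst w]

theorem exists_isNash_completeBipartiteGraph_ne [Finite α] [Finite β] [Nonempty α] {d : ℕ}
    (hd : 2 ≤ d) (hα : d ∣ Nat.card α) (hβ : d ∣ Nat.card β) :
    ∃ u : α ⊕ β → Fin d, IsNash (completeBipartiteGraph α β) u ∧ ∃ v w, u v ≠ u w := by
  obtain ⟨f, hf⟩ := exists_ncard_preimage_eq_div hα
  obtain ⟨g, hg⟩ := exists_ncard_preimage_eq_div hβ
  have hsurj (c : Fin d) : ∃ a, f a = c := by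
    have : 0 < Nat.card α / d := Nat.div_pos (Nat.le_of_dvd Nat.card_pos hα) (by omega)
    exact (Set.ncard_pos (Set.toFinite _)).1 (hf c ▸ this)
  obtain ⟨a₀, ha₀⟩ := hsurj ⟨0, by omega⟩
  obtain ⟨a₁, ha₁⟩ := hsurj ⟨1, hd⟩
  refine ⟨Sum.elim f g, (isNash_completeBipartiteGraph_iff _).2
    ⟨fun _ => isMode_of_ncard_preimage_eq hg _, fun _ => isMode_of_ncard_preimage_eq hf _⟩,
    .inl a₀, .inl a₁, ?_⟩
  simp [ha₀, ha₁]

end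

theorem completeBipartite_indecomposable_iff_coprime (n m : ℕ) (hn : 1 ≤ n) (hm : 1 ≤ m) :
    (∀ (C : Type) (u : Fin n ⊕ Fin m → C),
        IsNash (completeBipartiteGraph (Fin n) (Fin m)) u → ∀ v w, u v = u w) ↔
      Nat.Coprime n m := by
  have : Nonempty (Fin n) := ⟨⟨0, hn⟩⟩
  have : Nonempty (Fin m) := ⟨⟨0, hm⟩⟩
  constructor
  · intro hindec
    by_contra hcop
    have hd : 2 ≤ n.gcd m := by
      have := Nat.gcd_pos_of_pos_left m hn
      rw [Nat.Coprime] at hcop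
      omega
    obtain ⟨u, hu, v, w, hvw⟩ := exists_isNash_completeBipartiteGraph_ne (α := Fin n) (β := Fin m)
      hd (by simpa using n.gcd_dvd_left m) (by simpa using n.gcd_dvd_right m)
    exact hvw (hindec _ u hu v w)
  · intro hcop C u hu
    exact hu.eq_of_coprime_completeBipartiteGraph (by simpa using hcop)
end

section
/- Let G be a connected simple graph on n ≥ 2 vertices and let u be a Nash equilibrium strategy profile on G whose image consists of exactly d distinct strategies. Then every used strategy is played by at least 2 vertices, and consequently n ≥ 2d. -/
open SimpleGraph

/-!
In an equilibrium a vertex with a neighbour earns a positive payoff from that neighbour's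
strategy, so it earns a positive payoff from its own strategy as well: some neighbour plays
the same strategy. In a connected graph on at least two vertices every vertex has a neighbour,
so every strategy class has at least two members, and the classes partition the vertex set.
-/

theorem Set.mul_ncard_range_le_card {V C : Type*} [Fintype V] (f : V → C) (n : ℕ)
    (hn : ∀ c ∈ Set.range f, n ≤ {v | f v = c}.ncard) :
    n * (Set.range f).ncard ≤ Fintype.card V := by
  classical
  have hrange : Set.range f = ↑(Finset.univ.image f) := by simp
  rw [hrange, Set.ncard_coe_finset]
  refine Finset.mul_card_image_le_card Finset.univ n fun c hc => ?_
  have hfiber : {v | f v = c} = ↑(Finset.univ.filter fun v => f v = c) := by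
    rw [Finset.coe_filter_univ]
  rw [← Set.ncard_coe_finset, ← hfiber]
  exact hn c (hrange ▸ hc)

section Nash

variable {V C : Type*} {G : SimpleGraph V} {u : V → C}

theorem payoff_pos_of_adj [Finite V] {v x : V} (hvx : G.Adj v x) : 0 < payoff G u v (u x) :=
  (Set.ncard_pos (Set.toFinite _)).mpr ⟨x, hvx, rfl⟩

theorem IsNash.exists_adj_same_strategy [Finite V] (hu : IsNash G u) {v x : V}
    (hvx : G.Adj v x) : ∃ y, G.Adj v y ∧ u y = u v := by
  have hpos : 0 < payoff G u v (u v) := (payoff_pos_of_adj hvx).trans_le (hu v (u x))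
  exact (Set.ncard_pos (Set.toFinite _)).mp hpos

theorem IsNash.two_le_ncard_fiber [Finite V] (hu : IsNash G u) {v x : V} (hvx : G.Adj v x) :
    2 ≤ {w | u w = u v}.ncard := by
  obtain ⟨y, hvy, hy⟩ := hu.exists_adj_same_strategy hvx
  exact (Set.one_lt_ncard_iff (Set.toFinite _)).mpr ⟨v, y, rfl, hy, G.ne_of_adj hvy⟩

end Nash

theorem cluster_size_two_le {V C : Type*} [Fintype V] (G : SimpleGraph V)
    (hconn : G.Connected) (hV : 2 ≤ Fintype.card V)
    (u : V → C) (hu : IsNash G u) (d : ℕ) (hd : (Set.range u).ncard = d) :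
    (∀ c ∈ Set.range u, 2 ≤ {v : V | u v = c}.ncard) ∧ 2 * d ≤ Fintype.card V := by
  have : Nontrivial V := Fintype.one_lt_card_iff_nontrivial.mp hV
  have hfiber : ∀ c ∈ Set.range u, 2 ≤ {v : V | u v = c}.ncard := by
    rintro _ ⟨v, rfl⟩
    obtain ⟨x, hvx⟩ := hconn.preconnected.exists_adj_of_nontrivial v
    exact hu.two_le_ncard_fiber hvx
  exact ⟨hfiber, hd ▸ Set.mul_ncard_range_le_card u 2 hfiber⟩
end

section
/- For every n ≥ 4, the graph K_n − e obtained from the complete graph on n vertices by deleting a single edge is indecomposable: every Nash equilibrium strategy profile on K_n − e is constant. -/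
open SimpleGraph

theorem completeGraph_minus_edge_indecomposable {C : Type*} (n : ℕ) (hn : 4 ≤ n)
    (a b : Fin n) (hab : a ≠ b) (u : Fin n → C)
    (hu : IsNash ((completeGraph (Fin n)).deleteEdges {s(a, b)}) u) :
    ∀ v w, u v = u w := by
  classical
  set G := (completeGraph (Fin n)).deleteEdges {s(a, b)} with hG
  have hadj : ∀ v x : Fin n, G.Adj v x ↔ v ≠ x ∧ ¬(v = a ∧ x = b ∨ v = b ∧ x = a) := by
    intro v x
    simp [hG, deleteEdges_adj, Sym2.eq_iff]
  -- strict plurality for inner vertices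
  have key : ∀ v : Fin n, v ≠ a → v ≠ b → ∀ c : C, c ≠ u v →
      {x | u x = c}.ncard < {x | u x = u v}.ncard := by
    intro v hva hvb c hc
    have hAdj : ∀ x, G.Adj v x ↔ x ≠ v := by
      intro x
      rw [hadj]
      constructor
      · rintro ⟨h, -⟩; exact fun e => h e.symm
      · intro h
        refine ⟨fun e => h e.symm, ?_⟩
        rintro (⟨rfl, rfl⟩ | ⟨rfl, rfl⟩) <;> [exact hva rfl; exact hvb rfl]
    have h1 : payoff G u v c = {x | u x = c}.ncard := by
      unfold payoff
      congr 1
      ext x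
      simp only [hAdj, Set.mem_setOf_eq]
      constructor
      · rintro ⟨-, h⟩; exact h
      · intro h
        exact ⟨fun e => hc (by rw [← e, h]), h⟩
    have h2 : payoff G u v (u v) = ({x | u x = u v} \ {v}).ncard := by
      unfold payoff
      congr 1
      ext x
      simp only [hAdj, Set.mem_setOf_eq, Set.mem_diff, Set.mem_singleton_iff]
      tauto
    have hlt : ({x | u x = u v} \ {v}).ncard < {x | u x = u v}.ncard :=
      Set.ncard_diff_singleton_lt_of_mem (by simp) (Set.toFinite _)
    calc {x | u x = c}.ncard = payoff G u v c := h1.symm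
      _ ≤ payoff G u v (u v) := hu v c
      _ = ({x | u x = u v} \ {v}).ncard := h2
      _ < {x | u x = u v}.ncard := hlt
  -- all inner vertices agree
  have hm : ∀ v w : Fin n, v ≠ a → v ≠ b → w ≠ a → w ≠ b → u v = u w := by
    intro v w hva hvb hwa hwb
    by_contra hne
    have h1 := key v hva hvb (u w) (fun e => hne e.symm)
    have h2 := key w hwa hwb (u v) hne
    exact absurd h1 (not_lt.mpr h2.le)
  -- find an inner vertex
  obtain ⟨v0, hv0a, hv0b⟩ : ∃ v0 : Fin n, v0 ≠ a ∧ v0 ≠ b := by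
    by_contra h
    push_neg at h
    have hsub : (Finset.univ : Finset (Fin n)) ⊆ {a, b} := by
      intro x _
      simp only [Finset.mem_insert, Finset.mem_singleton]
      by_cases hx : x = a
      · exact Or.inl hx
      · exact Or.inr (h x hx)
    have := Finset.card_le_card hsub
    simp only [Finset.card_univ, Fintype.card_fin] at this
    have h2 : ({a, b} : Finset (Fin n)).card ≤ 2 := Finset.card_insert_le _ _ |>.trans (by simp)
    omega
  set m := u v0 with hm0
  -- endpoints play m too
  have hend : ∀ v : Fin n, v ≠ a → v ≠ b → u v = m := fun v hva hvb => hm v v0 hva hvb hv0a hv0b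
  have endpoint : ∀ p q : Fin n, p ≠ q → (s(p, q) : Sym2 (Fin n)) = s(a, b) →
      True := fun _ _ _ _ => trivial
  have hAdjEnd : ∀ x, (G.Adj a x ↔ x ≠ a ∧ x ≠ b) ∧ (G.Adj b x ↔ x ≠ a ∧ x ≠ b) := by
    intro x
    constructor <;> rw [hadj] <;> constructor
    · rintro ⟨h1, h2⟩
      exact ⟨fun e => h1 e.symm, fun e => h2 (Or.inl ⟨rfl, e⟩)⟩
    · rintro ⟨h1, h2⟩
      exact ⟨fun e => h1 e.symm, by rintro (⟨-, rfl⟩ | ⟨e, -⟩) <;> [exact h2 rfl; exact hab e]⟩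
    · rintro ⟨h1, h2⟩
      exact ⟨fun e => h2 (Or.inr ⟨rfl, e⟩), fun e => h1 e.symm⟩
    · rintro ⟨h1, h2⟩
      exact ⟨fun e => h2 e.symm, by rintro (⟨e, -⟩ | ⟨-, rfl⟩) <;> [exact hab e.symm; exact h1 rfl]⟩
  have hendval : ∀ p : Fin n, (∀ x, G.Adj p x ↔ x ≠ a ∧ x ≠ b) → u p = m := by
    intro p hAdj
    by_contra hne
    have hpos : 0 < payoff G u p m := by
      unfold payoff
      rw [Set.ncard_pos (Set.toFinite _)]
      exact ⟨v0, by rw [hAdj]; exact ⟨hv0a, hv0b⟩, rfl⟩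
    have hzero : payoff G u p (u p) = 0 := by
      unfold payoff
      rw [Set.ncard_eq_zero (Set.toFinite _)]
      ext x
      simp only [hAdj, Set.mem_setOf_eq, Set.mem_empty_iff_false, iff_false]
      rintro ⟨⟨hxa, hxb⟩, hx⟩
      exact hne (by rw [← hx, hend x hxa hxb])
    have := hu p m
    omega
  have hua : u a = m := hendval a (fun x => (hAdjEnd x).1)
  have hub : u b = m := hendval b (fun x => (hAdjEnd x).2)
  have hall : ∀ v : Fin n, u v = m := by
    intro v
    by_cases hva : v = a
    · rw [hva, hua]
    by_cases hvb : v = b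
    · rw [hvb, hub]
    exact hend v hva hvb
  intro v w
  rw [hall v, hall w]
end
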